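/- (Constancy of the dynamics within regimes) The update map t_b is constant on each open parameter regime: for all real b, b′ with b > 4 and b′ > 4, t_b = t_{b′} as maps on the 64 states; and for all real b, b′ with 3 < b < 4 and 3 < b′ < 4, t_b = t_{b′} as maps on the 64 states. -/

import Mathlib

/-- Von Neumann neighbourhoods on the 2×3 toroidal lattice.
Index `i : Fin 6` represents cell `i+1`, so `N(1)={2,3,5}` becomes `nbrs 0 = {1,2,4}`, etc. -/
def nbrs : Fin 6 → Finset (Fin 6)
  | 0 => {1, 2, 4}
  | 1 => {0, 3, 5}
  | 2 => {0, 3, 4}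
  | 3 => {1, 2, 5}
  | 4 => {0, 2, 5}
  | 5 => {1, 3, 4}

lemma nbrs_nonempty (i : Fin 6) : (nbrs i).Nonempty := by
  fin_cases i <;> simp [nbrs]

/-- Pairwise payoff to the first argument; `true` = cooperate, `false` = defect. -/
def pay (b : ℝ) : Bool → Bool → ℝ
  | false, false => 1
  | false, true  => b
  | true,  false => 0
  | true,  true  => 3

/-- Net payoff of cell `i` in state `σ`. -/
def payoff (b : ℝ) (σ : Fin 6 → Bool) (i : Fin 6) : ℝ :=
  ∑ j ∈ nbrs i, pay b (σ i) (σ j)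

/- Synchronous update map `t_b` on states: if the best payoff `m` among the
neighbours of cell `i` satisfies `m ≤ P_b(σ,i)` the cell keeps its strategy;
otherwise it cooperates iff some maximally-paid neighbour cooperates. -/
open scoped Classical in
noncomputable def update (b : ℝ) (σ : Fin 6 → Bool) : Fin 6 → Bool := fun i =>
  let m := (nbrs i).sup' (nbrs_nonempty i) fun j => payoff b σ j
  if m ≤ payoff b σ i then σ i
  else if ∃ j ∈ nbrs i, payoff b σ j = m ∧ σ j = true then true else false

/-- Decode an integer `0 ≤ n < 64` into a state: cell 1 is the most significant bit,
bit value 1 = cooperate. -/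
def dec (n : ℕ) : Fin 6 → Bool := fun i => n.testBit (5 - i.val)

/-- Encode a state as an integer via `n = Σ β(i)·2^(6−i)`. -/
def enc (σ : Fin 6 → Bool) : ℕ := ∑ i : Fin 6, if σ i then 2 ^ (5 - i.val) else 0

/-- The update map `t_b` acting on integer-coded states. -/
noncomputable def T (b : ℝ) (n : ℕ) : ℕ := enc (update b (dec n))

/-! A cooperator with `c` cooperating neighbours earns `3c`, a defector `3 + c(b - 1)`, and the
update rule depends on the payoffs only through their order. Two such payoffs can only swap order
at `b ∈ {-2, -1/2, 0, 1, 2, 5/2, 3, 4, 7}`, so nothing changes inside `(3, 4)`, and above `4` only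
the tie at `7` between a defector with one cooperating neighbour and a cooperator with three is
left. That pair never occurs: the 2×3 torus is the triangular prism graph, where distinct
non-adjacent cells share two neighbours, so once some cell has only cooperating neighbours, every
defector has at least two. -/

open Finset

theorem Finset.sum_comp_bool {ι R : Type*} [CommRing R] (s : Finset ι) (p : ι → Bool)
    (f : Bool → R) :
    ∑ j ∈ s, f (p j) = #s * f false + #{j ∈ s | p j} * (f true - f false) := by
  have hf : ∀ x : Bool, f x = f false + (if x then 1 else 0) * (f true - f false) := by
    rintro (_ | _) <;> simp
  simp only [hf (p _), sum_add_distrib, sum_const, nsmul_eq_mul, ← sum_mul, sum_boole]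

def coopCount (σ : Fin 6 → Bool) (i : Fin 6) : ℕ := #{j ∈ nbrs i | σ j}

/-- Payoff of a cell playing `s` with `c` cooperating neighbours. -/
def cellPayoff (b : ℝ) (s : Bool) (c : ℕ) : ℝ :=
  3 * pay b s false + c * (pay b s true - pay b s false)

lemma card_nbrs (i : Fin 6) : #(nbrs i) = 3 := by
  fin_cases i <;> rfl

lemma coopCount_le_three (σ : Fin 6 → Bool) (i : Fin 6) : coopCount σ i ≤ 3 :=
  card_nbrs i ▸ card_filter_le _ _

lemma payoff_eq_cellPayoff (b : ℝ) (σ : Fin 6 → Bool) (i : Fin 6) :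
    payoff b σ i = cellPayoff b (σ i) (coopCount σ i) := by
  rw [payoff, Finset.sum_comp_bool, card_nbrs, cellPayoff, coopCount]
  push_cast
  ring

lemma cellPayoff_le_iff_of_mem_Ioo {b b' : ℝ} (hb : b ∈ Set.Ioo 3 4) (hb' : b' ∈ Set.Ioo 3 4)
    {s s' : Bool} {c c' : ℕ} (hc : c ≤ 3) (hc' : c' ≤ 3) :
    cellPayoff b s c ≤ cellPayoff b s' c' ↔ cellPayoff b' s c ≤ cellPayoff b' s' c' := by
  obtain ⟨hb3, hb4⟩ := hb
  obtain ⟨hb3', hb4'⟩ := hb'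
  cases s <;> cases s' <;> interval_cases c <;> interval_cases c' <;>
    simp only [cellPayoff, pay] <;> norm_num <;> constructor <;> intro <;> linarith

lemma cellPayoff_le_iff_of_four_lt {b b' : ℝ} (hb : 4 < b) (hb' : 4 < b')
    {s s' : Bool} {c c' : ℕ} (hc : c ≤ 3) (hc' : c' ≤ 3)
    (h : (s, c) = (false, 1) → (s', c') ≠ (true, 3))
    (h' : (s', c') = (false, 1) → (s, c) ≠ (true, 3)) :
    cellPayoff b s c ≤ cellPayoff b s' c' ↔ cellPayoff b' s c ≤ cellPayoff b' s' c' := by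
  cases s <;> cases s' <;> interval_cases c <;> interval_cases c' <;>
    simp only [cellPayoff, pay] at * <;> norm_num at * <;> constructor <;> intro <;> linarith

lemma two_le_card_nbrs_inter {j k : Fin 6} (hjk : j ≠ k) (hadj : j ∉ nbrs k) :
    2 ≤ #(nbrs j ∩ nbrs k) := by
  revert j k; decide

lemma two_le_coopCount_of_coopCount_eq_three {σ : Fin 6 → Bool} {j k : Fin 6}
    (hk : coopCount σ k = 3) (hj : σ j = false) : 2 ≤ coopCount σ j := by
  have hcoop : ∀ x ∈ nbrs k, σ x = true :=
    card_filter_eq_iff.mp (hk.trans (card_nbrs k).symm)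
  by_cases hjk : j = k
  · subst hjk; omega
  by_cases hadj : j ∈ nbrs k
  · simp [hcoop j hadj] at hj
  calc 2 ≤ #(nbrs j ∩ nbrs k) := two_le_card_nbrs_inter hjk hadj
    _ ≤ coopCount σ j := card_le_card fun x hx => by
      rw [mem_inter] at hx
      exact mem_filter.mpr ⟨hx.1, hcoop x hx.2⟩

lemma payoff_le_payoff_iff_of_mem_Ioo {b b' : ℝ} (hb : b ∈ Set.Ioo 3 4)
    (hb' : b' ∈ Set.Ioo 3 4) (σ : Fin 6 → Bool) (j k : Fin 6) :
    payoff b σ j ≤ payoff b σ k ↔ payoff b' σ j ≤ payoff b' σ k := by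
  simp only [payoff_eq_cellPayoff]
  exact cellPayoff_le_iff_of_mem_Ioo hb hb' (coopCount_le_three σ j) (coopCount_le_three σ k)

lemma payoff_le_payoff_iff_of_four_lt {b b' : ℝ} (hb : 4 < b) (hb' : 4 < b')
    (σ : Fin 6 → Bool) (j k : Fin 6) :
    payoff b σ j ≤ payoff b σ k ↔ payoff b' σ j ≤ payoff b' σ k := by
  have notThresholdPair :
      ∀ x y, (σ x, coopCount σ x) = (false, 1) → (σ y, coopCount σ y) ≠ (true, 3) := by
    intro x y hx hy
    simp only [Prod.mk.injEq] at hx hy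
    have := two_le_coopCount_of_coopCount_eq_three hy.2 hx.1
    omega
  simp only [payoff_eq_cellPayoff]
  exact cellPayoff_le_iff_of_four_lt hb hb' (coopCount_le_three σ j) (coopCount_le_three σ k)
    (notThresholdPair j k) (notThresholdPair k j)

lemma eq_sup'_iff {ι α : Type*} [LinearOrder α] {s : Finset ι} (hs : s.Nonempty) (f : ι → α)
    {j : ι} (hj : j ∈ s) : f j = s.sup' hs f ↔ ∀ k ∈ s, f k ≤ f j := by
  rw [← sup'_le_iff hs]
  exact (le_sup' f hj).ge_iff_eq.symm

lemma update_eq_of_payoff_le_iff {b b' : ℝ} {σ : Fin 6 → Bool}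
    (h : ∀ j k, payoff b σ j ≤ payoff b σ k ↔ payoff b' σ j ≤ payoff b' σ k) :
    update b σ = update b' σ := by
  funext i
  have hstay := sup'_le_iff (nbrs_nonempty i) (f := (payoff b σ ·)) (a := payoff b σ i)
  have hstay' := sup'_le_iff (nbrs_nonempty i) (f := (payoff b' σ ·)) (a := payoff b' σ i)
  have hbest : ∀ j ∈ nbrs i,
      payoff b σ j = (nbrs i).sup' (nbrs_nonempty i) (payoff b σ ·) ↔
      payoff b' σ j = (nbrs i).sup' (nbrs_nonempty i) (payoff b' σ ·) := fun j hj => by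
    simp only [eq_sup'_iff _ _ hj, h]
  simp only [update, hstay, hstay', h]
  congr 2
  exact propext (exists_congr fun j => and_congr_right fun hj => and_congr_left' (hbest j hj))

theorem stmt14 :
    (∀ b b' : ℝ, 4 < b → 4 < b' → update b = update b') ∧
    (∀ b b' : ℝ, 3 < b → b < 4 → 3 < b' → b' < 4 → update b = update b') := by
  refine ⟨fun b b' hb hb' => ?_, fun b b' hb3 hb4 hb3' hb4' => ?_⟩
  · funext σ
    exact update_eq_of_payoff_le_iff (payoff_le_payoff_iff_of_four_lt hb hb' σ)
  · funext σ
    exact update_eq_of_payoff_le_iff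
      (payoff_le_payoff_iff_of_mem_Ioo ⟨hb3, hb4⟩ ⟨hb3', hb4'⟩ σ)
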